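/- If n is a Giuga number and a Carmichael number (a strong Giuga number), then for every positive integer k, n is a k-strong Giuga number; consequently, if there exists a positive integer k for which no k-strong Giuga number exists, then Giuga's conjecture holds (no composite n satisfies ∑_{j=1}^{n-1} j^{n-1} ≡ -1 (mod n)). -/

import Mathlib

/-! Modulo a prime `p ∣ n`, the sum `∑_{0<j<n} j^e` (with `e ≠ 0`) is `n/p` copies of
`∑_{x ∈ 𝔽_p} x^e`, which is `-1` if `p - 1 ∣ e` and `0` otherwise. Hence the sum is `-1` modulo
`p` exactly when `p - 1 ∣ e` and `p ∣ n/p - 1`. The latter condition for all `p ∣ n` forces `n`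
to be squarefree, so the local congruences lift to `n`, and for squarefree `n` the conditions
`p - 1 ∣ e` say `λ(n) ∣ e`. Thus `n` is `k`-strong Giuga iff it is Giuga with `λ(n) ∣ k(n-1)`;
a counterexample to Giuga's conjecture is `1`-strong, so `λ(n) ∣ n - 1` and it is `k`-strong
for every `k`. -/

open Finset

/-- The Carmichael function: exponent of the unit group of `ZMod n`. -/
noncomputable def carmichael (n : ℕ) : ℕ := Monoid.exponent (ZMod n)ˣ

/-- `n` is composite. -/
def Composite (n : ℕ) : Prop := 2 ≤ n ∧ ¬ n.Prime

/-- `n` is a Giuga number. -/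
def IsGiuga (n : ℕ) : Prop :=
  Composite n ∧ ∀ p : ℕ, p.Prime → p ∣ n → p ∣ (n / p - 1)

/-- `n` is a `k`-strong Giuga number. -/
def IsKStrongGiuga (n k : ℕ) : Prop :=
  Composite n ∧ ∑ j ∈ Finset.Ico 1 n, (j : ZMod n) ^ (k * (n - 1)) = -1

namespace FiniteField

variable {K : Type*} [Field K] [Fintype K]

theorem sum_pow_of_ne_zero {e : ℕ} (he : e ≠ 0) :
    ∑ x : K, x ^ e = if Fintype.card K - 1 ∣ e then -1 else 0 := by
  classical
  rw [← sum_pow_units K e, ← Fintype.sum_subtype_add_sum_subtype (· ≠ 0),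
    ← Fintype.sum_equiv unitsEquivNeZero (fun u : Kˣ => (u : K) ^ e) _ (fun _ => rfl),
    add_eq_left]
  exact Fintype.sum_eq_zero _ fun x => by simp [not_not.mp x.2, zero_pow he]

end FiniteField

theorem sum_range_mul_natCast_zmod {M : Type*} [AddCommMonoid M] (p m : ℕ) (f : ZMod p → M) :
    ∑ j ∈ range (m * p), f j = m • ∑ j ∈ range p, f j := by
  induction m with
  | zero => simp
  | succ m ih =>
    rw [add_mul, one_mul, sum_range_add, ih, succ_nsmul]
    simp

theorem sum_range_natCast_zmod {M : Type*} [AddCommMonoid M] (p : ℕ) [NeZero p]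
    (f : ZMod p → M) : ∑ j ∈ range p, f j = ∑ x : ZMod p, f x :=
  sum_nbij' Nat.cast ZMod.val (fun _ _ => mem_univ _) (fun x _ => mem_range.2 x.val_lt)
    (fun _ hj => ZMod.val_natCast_of_lt (mem_range.1 hj)) (fun x _ => ZMod.natCast_zmod_val x)
    (fun _ _ => rfl)

theorem ZMod.natCast_eq_one_iff_dvd_sub_one {a p : ℕ} (ha : 1 ≤ a) :
    (a : ZMod p) = 1 ↔ p ∣ a - 1 := by
  rw [← Nat.cast_one, eq_comm, ZMod.natCast_eq_natCast_iff, Nat.modEq_iff_dvd' ha]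

theorem ZMod.eq_of_forall_castHom_eq {n : ℕ} (hn : Squarefree n) {x y : ZMod n}
    (h : ∀ p, p.Prime → ∀ hpn : p ∣ n,
      ZMod.castHom hpn (ZMod p) x = ZMod.castHom hpn (ZMod p) y) : x = y := by
  have : NeZero n := ⟨hn.ne_zero⟩
  rw [← sub_eq_zero, ← ZMod.natCast_zmod_val (x - y), ZMod.natCast_eq_zero_iff]
  have hprod : ∏ p ∈ n.primeFactors, p ∣ (x - y).val := by
    refine prod_primes_dvd _ (fun p hp => (Nat.prime_of_mem_primeFactors hp).prime) fun p hp => ?_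
    have hpn := Nat.dvd_of_mem_primeFactors hp
    rw [← ZMod.natCast_eq_zero_iff, ZMod.natCast_val, ← ZMod.castHom_apply (h := hpn), map_sub,
      h p (Nat.prime_of_mem_primeFactors hp) hpn, sub_self]
  rwa [Nat.prod_primeFactors_of_squarefree hn] at hprod

theorem sum_Ico_one_natCast_pow_of_dvd {n p e : ℕ} (hp : p.Prime) (hpn : p ∣ n) (he : e ≠ 0) :
    ∑ j ∈ Ico 1 n, (j : ZMod p) ^ e = (n / p : ℕ) * if p - 1 ∣ e then -1 else 0 := by
  have : Fact p.Prime := ⟨hp⟩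
  calc ∑ j ∈ Ico 1 n, (j : ZMod p) ^ e = ∑ j ∈ range n, (j : ZMod p) ^ e := by
        refine sum_subset (fun j hj => mem_range.2 (mem_Ico.1 hj).2) fun j hj hj' => ?_
        obtain rfl : j = 0 := by simp only [mem_range, mem_Ico, not_and] at hj hj'; omega
        simp [he]
    _ = (n / p : ℕ) • ∑ x : ZMod p, x ^ e := by
        conv_lhs => rw [← Nat.div_mul_cancel hpn]
        rw [sum_range_mul_natCast_zmod p (n / p) (· ^ e), sum_range_natCast_zmod p (· ^ e)]
    _ = _ := by rw [nsmul_eq_mul, FiniteField.sum_pow_of_ne_zero he, ZMod.card]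

theorem sum_Ico_one_natCast_pow_eq_neg_one_iff_of_dvd {n p e : ℕ} (hn : n ≠ 0) (hp : p.Prime)
    (hpn : p ∣ n) (he : e ≠ 0) :
    ∑ j ∈ Ico 1 n, (j : ZMod p) ^ e = -1 ↔ p - 1 ∣ e ∧ p ∣ n / p - 1 := by
  have : Fact p.Prime := ⟨hp⟩
  rw [sum_Ico_one_natCast_pow_of_dvd hp hpn he]
  split_ifs with hdvd
  · rw [mul_neg_one, neg_inj,
      ZMod.natCast_eq_one_iff_dvd_sub_one (Nat.div_pos (Nat.le_of_dvd (by omega) hpn) hp.pos)]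
    exact (and_iff_right hdvd).symm
  · simp [hdvd]

theorem squarefree_of_forall_prime_dvd_div_sub_one {n : ℕ} (hn : n ≠ 0)
    (h : ∀ p, p.Prime → p ∣ n → p ∣ n / p - 1) : Squarefree n := by
  refine Nat.squarefree_iff_prime_squarefree.2 fun p hp hsq => hp.not_dvd_one ?_
  have hpn : p ∣ n := (dvd_mul_right p p).trans hsq
  have hdiv : p ∣ n / p := (Nat.dvd_div_iff_mul_dvd hpn).2 hsq
  have hpos : 1 ≤ n / p := Nat.div_pos (Nat.le_of_dvd (by omega) hpn) hp.pos
  simpa [Nat.sub_sub_self hpos] using Nat.dvd_sub hdiv (h p hp hpn)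

theorem sum_Ico_one_natCast_pow_eq_neg_one_iff {n e : ℕ} (hn : n ≠ 0) (he : e ≠ 0) :
    ∑ j ∈ Ico 1 n, (j : ZMod n) ^ e = -1 ↔
      ∀ p, p.Prime → p ∣ n → p - 1 ∣ e ∧ p ∣ n / p - 1 := by
  constructor
  · intro hsum p hp hpn
    refine (sum_Ico_one_natCast_pow_eq_neg_one_iff_of_dvd hn hp hpn he).1 ?_
    simpa only [map_sum, map_pow, map_natCast, map_neg, map_one]
      using congrArg (ZMod.castHom hpn (ZMod p)) hsum
  · intro H
    refine ZMod.eq_of_forall_castHom_eq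
      (squarefree_of_forall_prime_dvd_div_sub_one hn fun p hp hpn => (H p hp hpn).2)
      fun p hp hpn => ?_
    simpa only [map_sum, map_pow, map_natCast, map_neg, map_one]
      using (sum_Ico_one_natCast_pow_eq_neg_one_iff_of_dvd hn hp hpn he).2 (H p hp hpn)

theorem sub_one_dvd_carmichael {n p : ℕ} [NeZero n] (hp : p.Prime) (hpn : p ∣ n) :
    p - 1 ∣ carmichael n := by
  have : Fact p.Prime := ⟨hp⟩
  have hexp : Monoid.exponent (ZMod p)ˣ = p - 1 := by
    rw [IsCyclic.exponent_eq_card, Nat.card_eq_fintype_card, ZMod.card_units]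
  exact hexp ▸ MonoidHom.exponent_dvd (ZMod.unitsMap_surjective hpn)

theorem carmichael_dvd_iff_of_squarefree {n m : ℕ} (hn : Squarefree n) :
    carmichael n ∣ m ↔ ∀ p, p.Prime → p ∣ n → p - 1 ∣ m := by
  have : NeZero n := ⟨hn.ne_zero⟩
  refine ⟨fun h p hp hpn => (sub_one_dvd_carmichael hp hpn).trans h, fun h => ?_⟩
  refine Monoid.exponent_dvd_of_forall_pow_eq_one fun u =>
    Units.ext <| ZMod.eq_of_forall_castHom_eq hn fun p hp hpn => ?_
  have : Fact p.Prime := ⟨hp⟩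
  obtain ⟨c, rfl⟩ := h p hp hpn
  rw [Units.val_pow_eq_pow_val, Units.val_one, map_pow, map_one, pow_mul,
    ZMod.pow_card_sub_one_eq_one (u.isUnit.map _).ne_zero, one_pow]

theorem isKStrongGiuga_iff {n k : ℕ} (hk : 0 < k) :
    IsKStrongGiuga n k ↔ IsGiuga n ∧ carmichael n ∣ k * (n - 1) := by
  rw [IsKStrongGiuga, IsGiuga, and_assoc]
  refine and_congr_right fun ⟨hn2, _⟩ => ?_
  have hn0 : n ≠ 0 := by omega
  have he : k * (n - 1) ≠ 0 := Nat.mul_ne_zero hk.ne' (by omega)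
  rw [sum_Ico_one_natCast_pow_eq_neg_one_iff hn0 he]
  constructor
  · intro H
    have hg p hp hpn := (H p hp hpn).2
    exact ⟨hg, (carmichael_dvd_iff_of_squarefree
      (squarefree_of_forall_prime_dvd_div_sub_one hn0 hg)).2 fun p hp hpn => (H p hp hpn).1⟩
  · rintro ⟨hg, hdvd⟩ p hp hpn
    exact ⟨(carmichael_dvd_iff_of_squarefree
      (squarefree_of_forall_prime_dvd_div_sub_one hn0 hg)).1 hdvd p hp hpn, hg p hp hpn⟩

theorem strongGiuga_all_k_and_conjecture :
    (∀ n : ℕ, IsGiuga n → carmichael n ∣ n - 1 →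
      ∀ k : ℕ, 0 < k → IsKStrongGiuga n k) ∧
    ((∃ k : ℕ, 0 < k ∧ ∀ n : ℕ, ¬ IsKStrongGiuga n k) →
      ∀ n : ℕ, Composite n →
        ¬ ∑ j ∈ Finset.Ico 1 n, (j : ZMod n) ^ (n - 1) = -1) := by
  have strong n (hg : IsGiuga n) (hc : carmichael n ∣ n - 1) k (hk : 0 < k) :
      IsKStrongGiuga n k :=
    (isKStrongGiuga_iff hk).2 ⟨hg, hc.trans (dvd_mul_left _ _)⟩
  refine ⟨strong, ?_⟩
  rintro ⟨k, hk, hnone⟩ n hn hsum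
  obtain ⟨hg, hc⟩ := (isKStrongGiuga_iff one_pos).1 ⟨hn, by rwa [one_mul]⟩
  exact hnone n (strong n hg (by rwa [one_mul] at hc) k hk)
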